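/- (Maximum design-effect of ordered systematic sampling) Let N = np with n ≥ 2, p ≥ 2. Define clusters g_j = {j, j+p, ..., j+(n-1)p} for j = 1,...,p, cluster means m_{yj}, and S_Y² = (n²/(p-1)) ∑_{j=1}^p (m_{yj} - μ_y)². Then for every non-constant y, V_sys/V_srs = S_Y²/(n S_y²) ≤ n (N-1)/(N-n), with equality when y is constant on each cluster g_j (and non-constant overall). Hence the supremum of the design effect equals n(N-1)/(N-n). -/
import Mathlib

namespace DmaxSys

lemma cluster_eq_image (n p : ℕ) (hn : 0 < n) (hp : 0 < p) (j : Fin p) :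
    (Finset.univ.filter (fun k : Fin (n * p) => (k : ℕ) % p = (j : ℕ)))
      = Finset.univ.image (fun i : Fin n =>
          (⟨(j : ℕ) + (i : ℕ) * p, by
            have h1 := j.2; have h2 := i.2; nlinarith⟩ : Fin (n * p))) := by
  ext k
  simp only [Finset.mem_filter, Finset.mem_univ, true_and, Finset.mem_image]
  constructor
  · intro hk
    have hk2 : (k : ℕ) < n * p := k.2
    have hdiv : (k : ℕ) / p < n := by
      rw [Nat.div_lt_iff_lt_mul hp]; omega
    refine ⟨⟨(k : ℕ) / p, hdiv⟩, ?_⟩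
    apply Fin.ext
    simp only
    have h1 := Nat.div_add_mod (k : ℕ) p
    have h2 : p * ((k : ℕ) / p) = ((k : ℕ) / p) * p := Nat.mul_comm _ _
    omega
  · rintro ⟨i, rfl⟩
    simp [Nat.add_mul_mod_self_right, Nat.mod_eq_of_lt j.2]

lemma cluster_sum (n p : ℕ) (hn : 0 < n) (hp : 0 < p) (j : Fin p) (f : Fin (n * p) → ℝ) :
    ∑ k ∈ Finset.univ.filter (fun k : Fin (n * p) => (k : ℕ) % p = (j : ℕ)), f k
      = ∑ i : Fin n, f ⟨(j : ℕ) + (i : ℕ) * p, by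
            have h1 := j.2; have h2 := i.2; nlinarith⟩ := by
  rw [cluster_eq_image n p hn hp j, Finset.sum_image]
  intro a _ b _ hab
  have h : (a : ℕ) * p = (b : ℕ) * p := by
    have := congrArg Fin.val hab
    simp only [] at this
    omega
  exact Fin.ext (Nat.eq_of_mul_eq_mul_right hp h)

lemma cluster_card (n p : ℕ) (hn : 0 < n) (hp : 0 < p) (j : Fin p) :
    (Finset.univ.filter (fun k : Fin (n * p) => (k : ℕ) % p = (j : ℕ))).card = n := by
  have := cluster_sum n p hn hp j (fun _ => (1 : ℝ))
  simpa using this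

lemma fiber_sum (n p : ℕ) (hn : 0 < n) (hp : 0 < p) (f : Fin (n * p) → ℝ) :
    ∑ j : Fin p, ∑ k ∈ Finset.univ.filter (fun k : Fin (n * p) => (k : ℕ) % p = (j : ℕ)), f k
      = ∑ k, f k := by
  have key : ∀ j : Fin p,
      Finset.univ.filter (fun k : Fin (n * p) => (k : ℕ) % p = (j : ℕ))
        = Finset.univ.filter (fun k : Fin (n * p) =>
            (⟨(k : ℕ) % p, Nat.mod_lt _ hp⟩ : Fin p) = j) := by
    intro j; ext k; simp [Fin.ext_iff]
  calc ∑ j : Fin p, ∑ k ∈ Finset.univ.filter (fun k : Fin (n * p) => (k : ℕ) % p = (j : ℕ)), f k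
      = ∑ j : Fin p, ∑ k ∈ Finset.univ.filter (fun k : Fin (n * p) =>
            (⟨(k : ℕ) % p, Nat.mod_lt _ hp⟩ : Fin p) = j), f k := by
        exact Finset.sum_congr rfl (fun j _ => by rw [key j])
    _ = ∑ k, f k := Finset.sum_fiberwise _ _ _

lemma cluster_decomp (n p : ℕ) (hn : 0 < n) (hp : 0 < p) (y : Fin (n * p) → ℝ) (c : ℝ)
    (j : Fin p) :
    ∑ k ∈ Finset.univ.filter (fun k : Fin (n * p) => (k : ℕ) % p = (j : ℕ)), (y k - c) ^ 2
      = (∑ k ∈ Finset.univ.filter (fun k : Fin (n * p) => (k : ℕ) % p = (j : ℕ)),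
          (y k - (∑ l ∈ Finset.univ.filter (fun k : Fin (n * p) => (k : ℕ) % p = (j : ℕ)), y l)
            / (n : ℝ)) ^ 2)
        + (n : ℝ) *
          ((∑ l ∈ Finset.univ.filter (fun k : Fin (n * p) => (k : ℕ) % p = (j : ℕ)), y l)
            / (n : ℝ) - c) ^ 2 := by
  set G := Finset.univ.filter (fun k : Fin (n * p) => (k : ℕ) % p = (j : ℕ)) with hG
  have hcard : G.card = n := cluster_card n p hn hp j
  set S : ℝ := ∑ l ∈ G, y l with hSdef
  set mj : ℝ := S / (n : ℝ) with hmj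
  have hn' : (n : ℝ) ≠ 0 := by positivity
  have hS : (n : ℝ) * mj = S := by rw [hmj]; field_simp
  clear_value mj
  clear_value S
  have expand : ∀ k, (y k - c) ^ 2
      = (y k - mj) ^ 2 + (2 * (mj - c)) * y k + ((mj - c) ^ 2 - 2 * (mj - c) * mj) := by
    intro k; ring
  calc ∑ k ∈ G, (y k - c) ^ 2
      = (∑ k ∈ G, (y k - mj) ^ 2) + (2 * (mj - c)) * S
          + (n : ℝ) * ((mj - c) ^ 2 - 2 * (mj - c) * mj) := by
        simp_rw [expand]
        rw [Finset.sum_add_distrib, Finset.sum_add_distrib, ← Finset.mul_sum,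
          Finset.sum_const, hcard, nsmul_eq_mul, ← hSdef]
    _ = (∑ k ∈ G, (y k - mj) ^ 2) + (n : ℝ) * (mj - c) ^ 2 := by
        linear_combination (-2 * (mj - c)) * hS

/-- Between/within decomposition of the total sum of squares. -/
lemma T_decomp (n p : ℕ) (hn : 0 < n) (hp : 0 < p) (y : Fin (n * p) → ℝ) (c : ℝ) :
    ∑ k, (y k - c) ^ 2
      = (∑ j : Fin p, ∑ k ∈ Finset.univ.filter (fun k : Fin (n * p) => (k : ℕ) % p = (j : ℕ)),
          (y k - (∑ l ∈ Finset.univ.filter (fun k : Fin (n * p) => (k : ℕ) % p = (j : ℕ)), y l)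
            / (n : ℝ)) ^ 2)
        + (n : ℝ) * ∑ j : Fin p,
          ((∑ l ∈ Finset.univ.filter (fun k : Fin (n * p) => (k : ℕ) % p = (j : ℕ)), y l)
            / (n : ℝ) - c) ^ 2 := by
  rw [← fiber_sum n p hn hp (fun k => (y k - c) ^ 2)]
  rw [Finset.sum_congr rfl (fun j _ => cluster_decomp n p hn hp y c j)]
  rw [Finset.sum_add_distrib, Finset.mul_sum]

lemma real_ineq (a b B T : ℝ) (ha : 2 ≤ a) (hb : 2 ≤ b) (hB : 0 ≤ B) (hT : 0 < T)
    (h : a * B ≤ T) :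
    (a ^ 2 / (b - 1) * B) / (a * (T / (a * b - 1))) ≤ a * ((a * b - 1) / (a * b - a)) := by
  have h1 : (0:ℝ) < b - 1 := by linarith
  have h2 : (0:ℝ) < a * b - 1 := by nlinarith
  have h3 : (0:ℝ) < a * b - a := by nlinarith
  have hL : (a ^ 2 / (b - 1) * B) / (a * (T / (a * b - 1)))
      = (a * B * (a * b - 1)) / ((b - 1) * T) := by
    field_simp
  have hR : a * ((a * b - 1) / (a * b - a)) = (a * b - 1) / (b - 1) := by
    field_simp
  rw [hL, hR, div_le_div_iff₀ (by positivity) h1]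
  nlinarith [mul_le_mul_of_nonneg_left h (mul_nonneg h2.le h1.le)]

lemma real_eq (a b B T : ℝ) (ha : 2 ≤ a) (hb : 2 ≤ b) (hT : T ≠ 0) (h : T = a * B) :
    (a ^ 2 / (b - 1) * B) / (a * (T / (a * b - 1))) = a * ((a * b - 1) / (a * b - a)) := by
  have h1 : (0:ℝ) < b - 1 := by linarith
  have h2 : (0:ℝ) < a * b - 1 := by nlinarith
  have h3 : (0:ℝ) < a * b - a := by nlinarith
  have hB : B ≠ 0 := by rintro rfl; simp at h; exact hT h
  subst h
  field_simp


lemma sumsq_ne (N : ℕ) (y : Fin N → ℝ) (c : ℝ) (a b : Fin N) (hab : y a ≠ y b) :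
    ∑ x, (y x - c) ^ 2 ≠ 0 := by
  intro h0
  have hall : ∀ k : Fin N, y k - c = 0 := fun k =>
    pow_eq_zero_iff (two_ne_zero) |>.mp
      ((Finset.sum_eq_zero_iff_of_nonneg (fun k _ => sq_nonneg (y k - c))).mp h0 k
        (Finset.mem_univ k))
  have h1 := hall a
  have h2 := hall b
  exact hab (by linarith)

end DmaxSys

open DmaxSys in
/-- Maximum design-effect of ordered systematic sampling:
bounded by `n(N-1)/(N-n)`, with equality when `y` is constant on each cluster
(and non-constant overall); hence the supremum equals `n(N-1)/(N-n)`. -/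
theorem dmax_sys (n p : ℕ) (hn : 2 ≤ n) (hp : 2 ≤ p) :
    (let N := n * p
     let cluster := fun j : Fin p =>
       Finset.univ.filter (fun k : Fin (n * p) => (k : ℕ) % p = (j : ℕ))
     let μ := fun y : Fin (n * p) → ℝ => (∑ k, y k) / (N : ℝ)
     let m := fun (y : Fin (n * p) → ℝ) (j : Fin p) => (∑ k ∈ cluster j, y k) / (n : ℝ)
     let Sy2 := fun y : Fin (n * p) → ℝ => (∑ k, (y k - μ y) ^ 2) / ((N : ℝ) - 1)
     let SY2 := fun y : Fin (n * p) → ℝ =>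
       ((n : ℝ) ^ 2 / ((p : ℝ) - 1)) * ∑ j, (m y j - μ y) ^ 2
     let deff := fun y : Fin (n * p) → ℝ => SY2 y / ((n : ℝ) * Sy2 y)
     (∀ y, Sy2 y ≠ 0 → deff y ≤ (n : ℝ) * (((N : ℝ) - 1) / ((N : ℝ) - n))) ∧
       (∀ y : Fin (n * p) → ℝ,
           (∀ k l : Fin (n * p), (k : ℕ) % p = (l : ℕ) % p → y k = y l) →
           Sy2 y ≠ 0 →
           deff y = (n : ℝ) * (((N : ℝ) - 1) / ((N : ℝ) - n))) ∧
       (∃ y, Sy2 y ≠ 0 ∧ deff y = (n : ℝ) * (((N : ℝ) - 1) / ((N : ℝ) - n)))) := by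
  have hn0 : 0 < n := by omega
  have hp0 : 0 < p := by omega
  have ha : (2:ℝ) ≤ (n:ℝ) := by exact_mod_cast hn
  have hb : (2:ℝ) ≤ (p:ℝ) := by exact_mod_cast hp
  have hcast : ((n * p : ℕ) : ℝ) = (n:ℝ) * (p:ℝ) := by push_cast; ring
  have hNe : ((n * p : ℕ) : ℝ) - 1 ≠ 0 := by
    rw [hcast]; nlinarith
  -- the equality case, used twice
  have eqcase : ∀ y : Fin (n * p) → ℝ,
      (∀ k l : Fin (n * p), (k : ℕ) % p = (l : ℕ) % p → y k = y l) →
      (∑ x, (y x - (∑ k, y k) / ((n * p : ℕ) : ℝ)) ^ 2) / (((n * p : ℕ) : ℝ) - 1) ≠ 0 →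
      ((n : ℝ) ^ 2 / ((p : ℝ) - 1) *
          ∑ x : Fin p,
            ((∑ k ∈ Finset.univ.filter (fun k : Fin (n * p) => (k : ℕ) % p = (x : ℕ)), y k)
                / (n : ℝ) - (∑ k, y k) / ((n * p : ℕ) : ℝ)) ^ 2) /
        ((n : ℝ) * ((∑ x, (y x - (∑ k, y k) / ((n * p : ℕ) : ℝ)) ^ 2) / (((n * p : ℕ) : ℝ) - 1)))
        = (n : ℝ) * ((((n * p : ℕ) : ℝ) - 1) / (((n * p : ℕ) : ℝ) - (n : ℝ))) := by
    intro y hconst hS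
    set c : ℝ := (∑ k, y k) / ((n * p : ℕ) : ℝ) with hc
    have hym : ∀ j : Fin p, ∀ k ∈ Finset.univ.filter
        (fun k : Fin (n * p) => (k : ℕ) % p = (j : ℕ)),
        (∑ l ∈ Finset.univ.filter (fun k : Fin (n * p) => (k : ℕ) % p = (j : ℕ)), y l) / (n : ℝ)
          = y k := by
      intro j k hk
      have hkm : (k : ℕ) % p = (j : ℕ) := by simpa using hk
      have hall : ∀ l ∈ Finset.univ.filter
          (fun k : Fin (n * p) => (k : ℕ) % p = (j : ℕ)), y l = y k := by
        intro l hl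
        have hlm : (l : ℕ) % p = (j : ℕ) := by simpa using hl
        exact hconst l k (by omega)
      rw [Finset.sum_congr rfl hall, Finset.sum_const, cluster_card n p hn0 hp0 j,
        nsmul_eq_mul]
      field_simp
    have hW0 : (∑ j : Fin p, ∑ k ∈ Finset.univ.filter
          (fun k : Fin (n * p) => (k : ℕ) % p = (j : ℕ)),
          (y k - (∑ l ∈ Finset.univ.filter (fun k : Fin (n * p) => (k : ℕ) % p = (j : ℕ)), y l)
            / (n : ℝ)) ^ 2) = 0 := by
      refine Finset.sum_eq_zero fun j _ => Finset.sum_eq_zero fun k hk => ?_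
      rw [hym j k hk]; ring
    have hdec := T_decomp n p hn0 hp0 y c
    rw [hW0, zero_add] at hdec
    have hT : (∑ x, (y x - c) ^ 2) ≠ 0 := by
      intro h0; exact hS (by rw [h0, zero_div])
    rw [hcast]
    exact real_eq (n:ℝ) (p:ℝ) _ _ ha hb hT hdec
  refine ⟨fun y hS => ?_, fun y hconst hS => eqcase y hconst hS, ?_⟩
  · -- inequality
    simp only at hS ⊢
    set c : ℝ := (∑ k, y k) / ((n * p : ℕ) : ℝ) with hc
    have hdec := T_decomp n p hn0 hp0 y c
    have hT0 : (∑ x, (y x - c) ^ 2) ≠ 0 := by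
      intro h0; exact hS (by rw [h0, zero_div])
    have hTpos : 0 < ∑ x, (y x - c) ^ 2 :=
      (Finset.sum_nonneg fun k _ => sq_nonneg (y k - c)).lt_of_ne (Ne.symm hT0)
    have hB : 0 ≤ ∑ j : Fin p,
        ((∑ l ∈ Finset.univ.filter (fun k : Fin (n * p) => (k : ℕ) % p = (j : ℕ)), y l)
          / (n : ℝ) - c) ^ 2 :=
      Finset.sum_nonneg fun j _ => sq_nonneg _
    have hkey : (n : ℝ) * (∑ j : Fin p,
        ((∑ l ∈ Finset.univ.filter (fun k : Fin (n * p) => (k : ℕ) % p = (j : ℕ)), y l)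
          / (n : ℝ) - c) ^ 2) ≤ ∑ x, (y x - c) ^ 2 := by
      rw [hdec]
      have hW : 0 ≤ ∑ j : Fin p, ∑ k ∈ Finset.univ.filter
          (fun k : Fin (n * p) => (k : ℕ) % p = (j : ℕ)),
          (y k - (∑ l ∈ Finset.univ.filter (fun k : Fin (n * p) => (k : ℕ) % p = (j : ℕ)), y l)
            / (n : ℝ)) ^ 2 :=
        Finset.sum_nonneg fun j _ => Finset.sum_nonneg fun k _ => sq_nonneg _
      linarith
    rw [hcast]
    exact real_ineq (n:ℝ) (p:ℝ) _ _ ha hb hB hTpos hkey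
  · -- existence
    have h01 : (1 : ℕ) < n * p := by nlinarith
    refine ⟨fun k => if (k : ℕ) % p = 0 then (1:ℝ) else 0, ?_, ?_⟩
    · exact div_ne_zero
        (sumsq_ne (n * p) _ _ ⟨0, by omega⟩ ⟨1, h01⟩
          (by simp [Nat.mod_eq_of_lt (show 1 < p by omega)]))
        hNe
    · exact eqcase _ (fun k l h => by simp only [h])
        (div_ne_zero
          (sumsq_ne (n * p) _ _ ⟨0, by omega⟩ ⟨1, h01⟩
            (by simp [Nat.mod_eq_of_lt (show 1 < p by omega)]))
          hNe)
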